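/- arXiv:2003.07427 — 8 statements merged into one kernel-verified Lean document; each statement's English description precedes it below -/
import Mathlib

section
/- In the fixed graph construction G with t copies H¹, ..., H^t of the base graph H, for any m ∈ [k], the set (⋃_{i=1}^t Code^i_m) ∪ {v^i_m : i ∈ [t]} is an independent set. -/
/-- Vertices of the fixed graph `G` with `t` copies of the base graph `H`:
`Sum.inl (i, m)` is the clique node `v^i_m ∈ A^i`, and `Sum.inr (i, h, r)` is the
code-gadget node `σ^i_(h,r) ∈ C^i_h`. -/
abbrev LinVtx (t k ℓ α : ℕ) :=
  (Fin t × Fin k) ⊕ (Fin t × Fin (ℓ + α) × Fin (ℓ + α))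

/-- Adjacency of the fixed graph `G`: each `A^i` is a clique; `v^i_m` is adjacent to all
code nodes of copy `i` except `Code^i_m = {σ^i_(h, C(m)_h)}`; each `C^i_h` is a clique,
and between `C^i_h` and `C^j_h` (for `i ≠ j`) all edges are present except the natural
perfect matching; no edges between `A^i` and `A^j` or between `A^i` and `Code^j` for
`i ≠ j`, and no edges between `C^i_h` and `C^j_{h'}` for `h ≠ h'`. -/
def linAdj (t k ℓ α : ℕ) (C : Fin k → Fin (ℓ + α) → Fin (ℓ + α)) :
    LinVtx t k ℓ α → LinVtx t k ℓ α → Prop :=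
  fun u v =>
    match u, v with
    | Sum.inl (i, m), Sum.inl (i', m') => i = i' ∧ m ≠ m'
    | Sum.inl (i, m), Sum.inr (i', h, r) => i = i' ∧ r ≠ C m h
    | Sum.inr (i', h, r), Sum.inl (i, m) => i = i' ∧ r ≠ C m h
    | Sum.inr (_, h, r), Sum.inr (_, h', r') => h = h' ∧ r ≠ r'

/-- A set of vertices is independent if it contains no two adjacent vertices. -/
def linIndep (t k ℓ α : ℕ) (C : Fin k → Fin (ℓ + α) → Fin (ℓ + α))
    (I : Set (LinVtx t k ℓ α)) : Prop :=
  ∀ u ∈ I, ∀ v ∈ I, ¬ linAdj t k ℓ α C u v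

/-- In the fixed `t`-copy construction, for any `m ∈ [k]`, the set
`(⋃_{i=1}^t Code^i_m) ∪ {v^i_m : i ∈ [t]}` is an independent set. -/
theorem stmt3 (t k ℓ α : ℕ) (hk : k = (ℓ + α) ^ α)
    (C : Fin k → Fin (ℓ + α) → Fin (ℓ + α)) (m : Fin k) :
    linIndep t k ℓ α C
      ({v | ∃ i h, v = Sum.inr (i, h, C m h)} ∪ {v | ∃ i, v = Sum.inl (i, m)}) := by
  rintro u (⟨i, h, rfl⟩ | ⟨i, rfl⟩) v (⟨j, h', rfl⟩ | ⟨j, rfl⟩) hadj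
  · obtain ⟨hh, hr⟩ := hadj; subst hh; exact hr rfl
  · exact hadj.2 rfl
  · exact hadj.2 rfl
  · exact hadj.2 rfl
end

section
/- In the fixed graph construction G with t copies of the base graph, for any i ≠ j ∈ [t] and m₁ ≠ m₂ ∈ [k], the bipartite graph induced between Code^i_{m₁} and Code^j_{m₂} contains a matching of size at least ℓ. -/
/-- In the fixed `t`-copy construction, for any `i ≠ j` and `m₁ ≠ m₂`, the bipartite
graph induced between `Code^i_{m₁}` and `Code^j_{m₂}` contains a matching of size at
least `ℓ` (a set of at least `ℓ` edges with one endpoint in `Code^i_{m₁}` and the other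
in `Code^j_{m₂}`, pairwise vertex-disjoint). -/
theorem stmt4 (t k ℓ α : ℕ) (hk : k = (ℓ + α) ^ α)
    (C : Fin k → Fin (ℓ + α) → Fin (ℓ + α))
    (hC : ∀ m m' : Fin k, m ≠ m' → ℓ ≤ hammingDist (C m) (C m'))
    (i j : Fin t) (hij : i ≠ j) (m₁ m₂ : Fin k) (hm : m₁ ≠ m₂) :
    ∃ M : Finset (LinVtx t k ℓ α × LinVtx t k ℓ α),
      ℓ ≤ M.card ∧
      (∀ e ∈ M,
        (∃ h, e.1 = Sum.inr (i, h, C m₁ h)) ∧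
        (∃ h, e.2 = Sum.inr (j, h, C m₂ h)) ∧
        linAdj t k ℓ α C e.1 e.2) ∧
      (∀ e ∈ M, ∀ e' ∈ M, e ≠ e' → e.1 ≠ e'.1 ∧ e.2 ≠ e'.2) := by

  classical
  set S : Finset (Fin (ℓ + α)) := Finset.univ.filter (fun h => C m₁ h ≠ C m₂ h) with hS
  refine ⟨S.image (fun h => (Sum.inr (i, h, C m₁ h), Sum.inr (j, h, C m₂ h))), ?_, ?_, ?_⟩
  · rw [Finset.card_image_of_injective]
    · exact hC m₁ m₂ hm
    · intro a b hab
      exact (by simpa using congrArg Prod.fst hab : _ ∧ _).1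
  · intro e he
    simp only [Finset.mem_image, hS, Finset.mem_filter] at he
    obtain ⟨h, ⟨_, hne⟩, rfl⟩ := he
    exact ⟨⟨h, rfl⟩, ⟨h, rfl⟩, rfl, hne⟩
  · intro e he e' he' hee
    simp only [Finset.mem_image] at he he'
    obtain ⟨h, _, rfl⟩ := he
    obtain ⟨h', _, rfl⟩ := he'
    have : h ≠ h' := fun hh => hee (by subst hh; rfl)
    constructor <;> (intro hh; exact this (by simpa using hh : _ ∧ _).1)
end

section
/- In the linear lower bound graph G_{x̄} with t = 2 players, if the strings x¹ and x² are not disjoint (i.e., there exists m ∈ [k] with x¹_m = x²_m = 1), then G_{x̄} contains an independent set of total weight at least 4ℓ + 2α. -/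
/-- Node weights of `G_x̄`: `w(v^i_m) = ℓ` if `x^i_m = 1`, else `1`; all code nodes have
weight `1`. -/
def linWeight (t k ℓ α : ℕ) (x : Fin t → Fin k → Bool) : LinVtx t k ℓ α → ℕ :=
  fun v =>
    match v with
    | Sum.inl (i, m) => if x i m then ℓ else 1
    | Sum.inr _ => 1

/-- Linear lower bound graph with `t = 2`: if `x¹` and `x²` are not disjoint, i.e. there
is `m` with `x¹_m = x²_m = 1`, then `G_{x̄}` contains an independent set of total weight
at least `4ℓ + 2α`. -/
theorem stmt5 (k ℓ α : ℕ) (hk : k = (ℓ + α) ^ α)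
    (C : Fin k → Fin (ℓ + α) → Fin (ℓ + α))
    (hC : ∀ m m' : Fin k, m ≠ m' → ℓ ≤ hammingDist (C m) (C m'))
    (x : Fin 2 → Fin k → Bool) (m : Fin k)
    (hm : x 0 m = true ∧ x 1 m = true) :
    ∃ I : Finset (LinVtx 2 k ℓ α),
      linIndep 2 k ℓ α C ↑I ∧
      4 * ℓ + 2 * α ≤ ∑ v ∈ I, linWeight 2 k ℓ α x v := by
  classical
  set I1 : Finset (LinVtx 2 k ℓ α) := Finset.univ.image (fun i : Fin 2 => Sum.inl (i, m))
  set I2 : Finset (LinVtx 2 k ℓ α) :=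
    Finset.univ.image (fun p : Fin 2 × Fin (ℓ + α) => Sum.inr (p.1, p.2, C m p.2))
  refine ⟨I1 ∪ I2, ?_, ?_⟩
  · intro u hu v hv hadj
    simp only [Finset.coe_union, Set.mem_union, Finset.coe_image, Set.image_univ,
      Set.mem_range, Finset.coe_univ, I1, I2] at hu hv
    rcases hu with ⟨i, rfl⟩ | ⟨p, rfl⟩ <;> rcases hv with ⟨j, rfl⟩ | ⟨q, rfl⟩ <;>
      simp [linAdj] at hadj
    · exact hadj.2 (congrArg (C m) hadj.1)
  · have hdisj : Disjoint I1 I2 := by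
      simp only [Finset.disjoint_left, I1, I2, Finset.mem_image]
      rintro a ⟨i, _, rfl⟩ ⟨p, _, h⟩
      exact absurd h (by simp)
    rw [Finset.sum_union hdisj]
    have h1 : ∑ v ∈ I1, linWeight 2 k ℓ α x v = 2 * ℓ := by
      rw [Finset.sum_image (by intro a _ b _ h; simpa using h)]
      rw [Fin.sum_univ_two]
      simp [linWeight, hm.1, hm.2, two_mul]
    have h2 : ∑ v ∈ I2, linWeight 2 k ℓ α x v = 2 * (ℓ + α) := by
      rw [Finset.sum_image (by intro a _ b _ h; simp at h; exact Prod.ext h.1 h.2.1)]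
      simp [linWeight, Finset.card_univ, mul_comm]
    rw [h1, h2]
    omega
end

section
/- In the linear lower bound graph G_{x̄} with t players, if there exists m ∈ [k] with x¹_m = x²_m = ⋯ = x^t_m = 1, then G_{x̄} contains an independent set of total weight at least t(2ℓ + α). -/
/-- Linear lower bound graph with `t` players: if there is `m` with
`x¹_m = ⋯ = x^t_m = 1`, then `G_{x̄}` contains an independent set of total weight at
least `t(2ℓ + α)`. -/
theorem stmt7 (t k ℓ α : ℕ) (hk : k = (ℓ + α) ^ α)
    (C : Fin k → Fin (ℓ + α) → Fin (ℓ + α))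
    (hC : ∀ m m' : Fin k, m ≠ m' → ℓ ≤ hammingDist (C m) (C m'))
    (x : Fin t → Fin k → Bool) (m : Fin k)
    (hm : ∀ i : Fin t, x i m = true) :
    ∃ I : Finset (LinVtx t k ℓ α),
      linIndep t k ℓ α C ↑I ∧
      t * (2 * ℓ + α) ≤ ∑ v ∈ I, linWeight t k ℓ α x v := by
  classical
  set A : Finset (LinVtx t k ℓ α) :=
    Finset.univ.image (fun i : Fin t => Sum.inl (i, m)) with hA
  set B : Finset (LinVtx t k ℓ α) :=
    Finset.univ.image (fun p : Fin t × Fin (ℓ + α) => Sum.inr (p.1, p.2, C m p.2)) with hB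
  refine ⟨A ∪ B, ?_, ?_⟩
  · -- independence
    intro u hu v hv
    simp only [Finset.coe_union, Set.mem_union, hA, hB, Finset.coe_image,
      Set.mem_image, Finset.coe_univ, Set.image_univ, Set.mem_range] at hu hv
    rcases hu with ⟨i, rfl⟩ | ⟨p, rfl⟩ <;> rcases hv with ⟨j, rfl⟩ | ⟨q, rfl⟩ <;>
      simp only [linAdj] <;> rintro ⟨h1, h2⟩
    · exact h2 rfl
    · exact h2 rfl
    · exact h2 rfl
    · exact h2 (by rw [h1])
  · -- weight
    have hdisj : Disjoint A B := by
      simp only [hA, hB, Finset.disjoint_left, Finset.mem_image]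
      rintro a ⟨i, _, rfl⟩ ⟨p, _, h⟩
      exact absurd h (by simp)
    rw [Finset.sum_union hdisj]
    have hAsum : ∑ v ∈ A, linWeight t k ℓ α x v = t * ℓ := by
      rw [hA, Finset.sum_image (by intro a _ b _ h; simpa using h)]
      simp [linWeight, hm]
    have hBsum : ∑ v ∈ B, linWeight t k ℓ α x v = t * (ℓ + α) := by
      rw [hB, Finset.sum_image (by
        intro a _ b _ h
        simp only [Sum.inr.injEq, Prod.mk.injEq] at h
        exact Prod.ext h.1 h.2.1)]
      simp [linWeight, Finset.card_univ]
    rw [hAsum, hBsum]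
    ring_nf
    omega
end

section
/- Let I be an independent set in the fixed t-copy graph G, and let m₁, ..., m_t ∈ [k] be distinct. If v^i_{m_i} ∈ I for all i ∈ [t], then |I ∩ (⋃_{i=1}^t Code^i_{m_i})| ≤ ℓ + α·t². -/
/-- The set of code nodes `⋃_{i=1}^t Code^i_{m_i}` for a choice `m_i` per copy. -/
def codeUnion (t k ℓ α : ℕ) (C : Fin k → Fin (ℓ + α) → Fin (ℓ + α))
    (m : Fin t → Fin k) : Finset (LinVtx t k ℓ α) :=
  Finset.image (fun p : Fin t × Fin (ℓ + α) => Sum.inr (p.1, p.2, C (m p.1) p.2))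
    Finset.univ

/-- Helper claim: if `I` is an independent set of the fixed `t`-copy graph containing
`v^i_{m_i}` for distinct `m_1, …, m_t`, then `|I ∩ ⋃_i Code^i_{m_i}| ≤ ℓ + α·t²`. -/
theorem stmt8 (t k ℓ α : ℕ) (hk : k = (ℓ + α) ^ α)
    (C : Fin k → Fin (ℓ + α) → Fin (ℓ + α))
    (hC : ∀ m m' : Fin k, m ≠ m' → ℓ ≤ hammingDist (C m) (C m'))
    (m : Fin t → Fin k) (hm : Function.Injective m)
    (I : Finset (LinVtx t k ℓ α)) (hI : linIndep t k ℓ α C ↑I)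
    (hv : ∀ i : Fin t, Sum.inl (i, m i) ∈ I) :
    (I ∩ codeUnion t k ℓ α C m).card ≤ ℓ + α * t ^ 2 := by
  classical
  rcases Nat.eq_zero_or_pos t with ht | ht
  · subst ht
    have hcu : codeUnion 0 k ℓ α C m = ∅ := by
      simp [codeUnion]
    simp [hcu]
  -- the parametrization of code nodes
  set f : Fin t × Fin (ℓ + α) → LinVtx t k ℓ α :=
    fun p => Sum.inr (p.1, p.2, C (m p.1) p.2) with hf
  have hfinj : Function.Injective f := by
    intro p q hpq
    simp only [hf, Sum.inr.injEq, Prod.mk.injEq] at hpq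
    exact Prod.ext hpq.1 hpq.2.1
  set S : Fin (ℓ + α) → Finset (Fin t) :=
    fun h => Finset.univ.filter (fun i => f (i, h) ∈ I) with hS
  -- Step 1 : the intersection cardinality is ∑ h, (S h).card
  have h1 : I ∩ codeUnion t k ℓ α C m
      = Finset.image f (Finset.univ.filter (fun p => f p ∈ I)) := by
    ext x
    simp only [Finset.mem_inter, codeUnion, Finset.mem_image, Finset.mem_filter,
      Finset.mem_univ, true_and, hf]
    constructor
    · rintro ⟨hxI, p, rfl⟩; exact ⟨p, hxI, rfl⟩
    · rintro ⟨p, hpI, rfl⟩; exact ⟨hpI, p, rfl⟩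
  have h2 : (I ∩ codeUnion t k ℓ α C m).card = ∑ h : Fin (ℓ + α), (S h).card := by
    rw [h1, Finset.card_image_of_injective _ hfinj, Finset.card_filter]
    rw [Fintype.sum_prod_type_right]
    refine Finset.sum_congr rfl fun h _ => ?_
    rw [hS]
    rw [Finset.card_filter]
  -- per-position bound via offdiag
  have h3 : ∀ h : Fin (ℓ + α), (S h).card ≤ 1 + (S h).offDiag.card := by
    intro h
    rw [Finset.offDiag_card]
    generalize (S h).card = c
    rcases c with _ | s
    · exact Nat.zero_le _
    · have hexp : (s + 1) * (s + 1) = s * s + 2 * s + 1 := by ring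
      omega
  -- for a pair of distinct indices, both present at ≤ α positions
  have hpair : ∀ i j : Fin t, i ≠ j →
      (Finset.univ.filter (fun h : Fin (ℓ + α) => (i, j) ∈ (S h).offDiag)).card ≤ α := by
    intro i j hij
    have hsub : (Finset.univ.filter (fun h : Fin (ℓ + α) => (i, j) ∈ (S h).offDiag))
        ⊆ Finset.univ.filter (fun h : Fin (ℓ + α) => C (m i) h = C (m j) h) := by
      intro h hh
      simp only [Finset.mem_filter, Finset.mem_univ, true_and, Finset.mem_offDiag,
        hS, hf] at hh ⊢
      obtain ⟨hiI, hjI, -⟩ := hh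
      have := hI _ (Finset.mem_coe.2 hiI) _ (Finset.mem_coe.2 hjI)
      simp only [linAdj] at this
      by_contra hne
      exact this ⟨trivial, hne⟩
    refine le_trans (Finset.card_le_card hsub) ?_
    have hdist := hC (m i) (m j) (fun hmm => hij (hm hmm))
    have hdd : hammingDist (C (m i)) (C (m j))
        = (Finset.univ.filter (fun h : Fin (ℓ + α) => ¬ C (m i) h = C (m j) h)).card := by
      rfl
    have hcc := Finset.card_filter_add_card_filter_not
      (s := (Finset.univ : Finset (Fin (ℓ + α))))
      (p := fun h => C (m i) h = C (m j) h)
    simp only [Finset.card_univ, Fintype.card_fin] at hcc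
    omega
  -- sum of offdiag cards
  have h4 : ∑ h : Fin (ℓ + α), (S h).offDiag.card ≤ α * (t * t - t) := by
    have hrw : ∀ h : Fin (ℓ + α), (S h).offDiag.card
        = ∑ p : Fin t × Fin t, (if p ∈ (S h).offDiag then 1 else 0) := by
      intro h
      rw [← Finset.card_filter]
      congr 1
      ext p
      simp [Finset.mem_filter]
    calc ∑ h : Fin (ℓ + α), (S h).offDiag.card
        = ∑ h : Fin (ℓ + α), ∑ p : Fin t × Fin t, (if p ∈ (S h).offDiag then 1 else 0) := by
          exact Finset.sum_congr rfl fun h _ => hrw h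
      _ = ∑ p : Fin t × Fin t, ∑ h : Fin (ℓ + α), (if p ∈ (S h).offDiag then 1 else 0) :=
          Finset.sum_comm
      _ ≤ ∑ p : Fin t × Fin t, (if p.1 ≠ p.2 then α else 0) := by
          refine Finset.sum_le_sum fun p _ => ?_
          by_cases hpp : p.1 = p.2
          · simp only [hpp, ne_eq, not_true_eq_false, if_false]
            refine le_of_eq (Finset.sum_eq_zero fun h _ => ?_)
            simp [Finset.mem_offDiag, hpp]
          · simp only [ne_eq, hpp, not_false_eq_true, if_true]
            rw [← Finset.card_filter]
            have := hpair p.1 p.2 hpp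
            simpa using this
      _ = α * (Finset.univ.filter (fun p : Fin t × Fin t => p.1 ≠ p.2)).card := by
          rw [Finset.sum_ite, Finset.sum_const, Finset.sum_const]
          simp [mul_comm]
      _ = α * (t * t - t) := by
          have hset : (Finset.univ.filter (fun p : Fin t × Fin t => p.1 ≠ p.2))
              = (Finset.univ : Finset (Fin t)).offDiag := by
            ext p
            simp [Finset.mem_offDiag, ne_eq]
          rw [hset, Finset.offDiag_card]
          simp
  -- put things together
  have h5 : (I ∩ codeUnion t k ℓ α C m).card ≤ (ℓ + α) + α * (t * t - t) := by
    rw [h2]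
    calc ∑ h : Fin (ℓ + α), (S h).card
        ≤ ∑ h : Fin (ℓ + α), (1 + (S h).offDiag.card) := Finset.sum_le_sum fun h _ => h3 h
      _ = (ℓ + α) + ∑ h : Fin (ℓ + α), (S h).offDiag.card := by
          rw [Finset.sum_add_distrib]
          simp
      _ ≤ (ℓ + α) + α * (t * t - t) := by
          exact Nat.add_le_add_left h4 _
  refine le_trans h5 ?_
  have htt : t ≤ t * t := Nat.le_mul_of_pos_left t ht
  have hsq : t ^ 2 = t * t := sq t
  have hmul : α * (t * t) = α * (t * t - t) + α * t := by
    rw [← Nat.mul_add]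
    congr 1
    omega
  have hαt : α ≤ α * t := Nat.le_mul_of_pos_right α ht
  rw [hsq, hmul]
  omega
end

section
/- Let I be an independent set in the fixed t-copy graph G, and let m₁, ..., m_t ∈ [k] be distinct with {v^i_{m_i} : i ∈ [t]} ⊆ I. Then the total weight of I is at most (t+1)ℓ + α·t². -/
/-!
Independence pins `I` down: inside copy `i` it can only contain `v^i_{m_i}` and the code
nodes `σ^i_(h, C(m_i)_h)`, so the weight of `I` is `tℓ` plus its number of code nodes.
Code nodes of `I` in the same column `h` carry the same symbol, so two copies `i ≠ j` can
both be present in column `h` only where the codewords `C(m_i)` and `C(m_j)` agree, i.e. in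
at most `α` columns. A column with `s` code nodes has `s(s-1) ≥ s - 1` ordered pairs of them,
hence there are at most `(ℓ + α) + α·t(t-1) ≤ ℓ + α·t²` code nodes.
-/

open Finset

theorem Finset.card_le_one_add_card_offDiag {ι : Type*} [DecidableEq ι] (s : Finset ι) :
    #s ≤ 1 + #s.offDiag := by
  have h : 2 * #s ≤ #s * #s + 1 := by nlinarith [sq_nonneg ((#s : ℤ) - 1)]
  rw [offDiag_card]
  omega

theorem sum_card_le_of_card_agree_le {ι κ β : Type*} [Fintype ι] [DecidableEq ι] [Fintype κ]
    [DecidableEq κ] [DecidableEq β] {α : ℕ} (c : ι → κ → β)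
    (hc : ∀ i j, i ≠ j → #{h | c i h = c j h} ≤ α) (S : κ → Finset ι)
    (hS : ∀ h, ∀ i ∈ S h, ∀ j ∈ S h, c i h = c j h) :
    ∑ h, #(S h) ≤ Fintype.card κ + α * #(univ : Finset ι).offDiag := by
  have hpairs : ∀ h, (S h).offDiag = (univ : Finset ι).offDiag.bipartiteBelow
      (fun q h => q.1 ∈ S h ∧ q.2 ∈ S h) h := by
    intro h; ext q; simp [bipartiteBelow, and_left_comm, and_comm]
  have hshared : ∀ q ∈ (univ : Finset ι).offDiag,
      #(univ.bipartiteAbove (fun q h => q.1 ∈ S h ∧ q.2 ∈ S h) q) ≤ α := by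
    rintro ⟨i, j⟩ hq
    refine le_trans (card_le_card fun h => ?_) (hc i j (mem_offDiag.1 hq).2.2)
    simp only [bipartiteAbove, mem_filter, mem_univ, true_and]
    exact fun hij => hS h i hij.1 j hij.2
  calc ∑ h, #(S h) ≤ ∑ h : κ, (1 + #(S h).offDiag) :=
        sum_le_sum fun h _ => (S h).card_le_one_add_card_offDiag
    _ = Fintype.card κ + ∑ q ∈ (univ : Finset ι).offDiag,
          #(univ.bipartiteAbove (fun q h => q.1 ∈ S h ∧ q.2 ∈ S h) q) := by
        rw [sum_add_distrib, sum_card_bipartiteAbove_eq_sum_card_bipartiteBelow]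
        simp [hpairs]
    _ ≤ Fintype.card κ + α * #(univ : Finset ι).offDiag := by
        grw [sum_le_card_nsmul _ _ α hshared, smul_eq_mul, mul_comm]

theorem card_filter_eq_le_of_le_hammingDist {ι β : Type*} [Fintype ι] [DecidableEq β]
    {x y : ι → β} {d : ℕ} (h : d ≤ hammingDist x y) :
    #{i | x i = y i} ≤ Fintype.card ι - d := by
  have := card_filter_add_card_filter_not (s := univ) (p := fun i => x i = y i)
  rw [card_univ] at this
  simp only [hammingDist, ne_eq] at h
  omega

namespace linIndep

variable {t k ℓ α : ℕ} {C : Fin k → Fin (ℓ + α) → Fin (ℓ + α)} {m : Fin t → Fin k}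
  {I : Finset (LinVtx t k ℓ α)}

theorem eq_of_inl_mem (hI : linIndep t k ℓ α C I) (hv : ∀ i, Sum.inl (i, m i) ∈ I)
    {i : Fin t} {m' : Fin k} (h : Sum.inl (i, m') ∈ I) : m' = m i := by
  by_contra hne
  exact hI _ (hv i) _ h ⟨rfl, Ne.symm hne⟩

theorem eq_of_inr_mem (hI : linIndep t k ℓ α C I) (hv : ∀ i, Sum.inl (i, m i) ∈ I)
    {i : Fin t} {h r : Fin (ℓ + α)} (hr : Sum.inr (i, h, r) ∈ I) : r = C (m i) h := by
  by_contra hne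
  exact hI _ hr _ (hv i) ⟨rfl, hne⟩

theorem eq_of_inr_mem_of_inr_mem (hI : linIndep t k ℓ α C I) {i j : Fin t}
    {h r r' : Fin (ℓ + α)} (hr : Sum.inr (i, h, r) ∈ I) (hr' : Sum.inr (j, h, r') ∈ I) :
    r = r' := by
  by_contra hne
  exact hI _ hr _ hr' ⟨rfl, hne⟩

theorem sum_eq_sum_inl_add_sum_card_inr (hI : linIndep t k ℓ α C I) (hv : ∀ i, Sum.inl (i, m i) ∈ I)
    (w : LinVtx t k ℓ α → ℕ) (hwCode : ∀ i h r, w (Sum.inr (i, h, r)) = 1) :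
    ∑ v ∈ I, w v = ∑ i, w (Sum.inl (i, m i)) +
      ∑ h, #{i | Sum.inr (i, h, C (m i) h) ∈ I} := by
  have hA : ∀ i, ∑ m', (if Sum.inl (i, m') ∈ I then w (Sum.inl (i, m')) else 0) =
      w (Sum.inl (i, m i)) := by
    intro i
    rw [Fintype.sum_eq_single (m i) fun m' hm' => if_neg fun h => hm' (eq_of_inl_mem hI hv h),
      if_pos (hv i)]
  have hCode : ∀ i h, ∑ r, (if Sum.inr (i, h, r) ∈ I then w (Sum.inr (i, h, r)) else 0) =
      if Sum.inr (i, h, C (m i) h) ∈ I then 1 else 0 := by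
    intro i h
    rw [Fintype.sum_eq_single (C (m i) h) fun r hr => if_neg fun h => hr (eq_of_inr_mem hI hv h),
      hwCode]
  rw [← Finset.sum_ite_mem_eq, Fintype.sum_sum_type, Fintype.sum_prod_type,
    Fintype.sum_prod_type]
  simp only [hA, Fintype.sum_prod_type, hCode, card_filter]
  rw [sum_comm]

end linIndep

theorem stmt9_general (t k ℓ α : ℕ)
    (C : Fin k → Fin (ℓ + α) → Fin (ℓ + α))
    (hC : ∀ m m' : Fin k, m ≠ m' → ℓ ≤ hammingDist (C m) (C m'))
    (m : Fin t → Fin k) (hm : Function.Injective m)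
    (w : LinVtx t k ℓ α → ℕ)
    (hwA : ∀ i : Fin t, w (Sum.inl (i, m i)) = ℓ)
    (hwCode : ∀ i h r, w (Sum.inr (i, h, r)) = 1)
    (I : Finset (LinVtx t k ℓ α)) (hI : linIndep t k ℓ α C ↑I)
    (hv : ∀ i : Fin t, Sum.inl (i, m i) ∈ I) :
    ∑ v ∈ I, w v ≤ (t + 1) * ℓ + α * t ^ 2 := by
  rcases Nat.eq_zero_or_pos t with rfl | ht
  · simp [eq_empty_of_isEmpty I]
  have hagree : ∀ i j, i ≠ j → #{h | C (m i) h = C (m j) h} ≤ α := fun i j hij =>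
    (card_filter_eq_le_of_le_hammingDist (hC _ _ (hm.ne hij))).trans (by simp)
  have hcode := sum_card_le_of_card_agree_le (fun i => C (m i)) hagree
    (fun h => {i | Sum.inr (i, h, C (m i) h) ∈ I})
    (fun h i hi j hj => hI.eq_of_inr_mem_of_inr_mem (by simpa using hi) (by simpa using hj))
  have hpairs : 1 + (t * t - t) ≤ t ^ 2 := by
    have := Nat.le_mul_self t
    rw [sq]
    omega
  rw [hI.sum_eq_sum_inl_add_sum_card_inr hv w hwCode]
  simp only [hwA, sum_const, card_univ, Fintype.card_fin, offDiag_card, smul_eq_mul] at hcode ⊢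
  linarith [Nat.mul_le_mul_left α hpairs]

/-- Corollary of the helper claim: if `I` is an independent set of the fixed `t`-copy
graph containing `v^i_{m_i}` for distinct `m_1, …, m_t`, where each selected clique node
`v^i_{m_i}` has weight `ℓ` and every code node has weight `1`, then the total weight of
`I` is at most `(t+1)ℓ + α·t²`. -/
theorem stmt9 (t k ℓ α : ℕ) (hk : k = (ℓ + α) ^ α)
    (C : Fin k → Fin (ℓ + α) → Fin (ℓ + α))
    (hC : ∀ m m' : Fin k, m ≠ m' → ℓ ≤ hammingDist (C m) (C m'))
    (m : Fin t → Fin k) (hm : Function.Injective m)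
    (w : LinVtx t k ℓ α → ℕ)
    (hwA : ∀ i : Fin t, w (Sum.inl (i, m i)) = ℓ)
    (hwCode : ∀ i h r, w (Sum.inr (i, h, r)) = 1)
    (I : Finset (LinVtx t k ℓ α)) (hI : linIndep t k ℓ α C ↑I)
    (hv : ∀ i : Fin t, Sum.inl (i, m i) ∈ I) :
    ∑ v ∈ I, w v ≤ (t + 1) * ℓ + α * t ^ 2 :=
  stmt9_general t k ℓ α C hC m hm w hwA hwCode I hI hv
end

section
/- In the quadratic lower bound graph F_{x̄}, if there is a pair (m₁, m₂) ∈ [k] × [k] with x^i_{(m₁,m₂)} = 1 for all i ∈ [t], then F_{x̄} contains an independent set of total weight at least 4tℓ + 2αt. -/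
/-- Vertices of the quadratic lower bound graph `F_{x̄}`: `Sum.inl (i, b, m)` is the
clique node `v^{(i,b)}_m ∈ A^{(i,b)}` (player `i`, copy `b`), and
`Sum.inr (i, b, h, r)` is the code node `σ^{(i,b)}_(h,r)`; copy `1` is `b = false` and
copy `2` is `b = true`. -/
abbrev QuadVtx (t k ℓ α : ℕ) :=
  (Fin t × Bool × Fin k) ⊕ (Fin t × Bool × Fin (ℓ + α) × Fin (ℓ + α))

/-- Adjacency of `F_{x̄}`: within each copy `b`, the `t`-copy linear construction
(cliques `A^{(i,b)}`, `v^{(i,b)}_m` adjacent to the copy's code nodes except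
`Code^{(i,b)}_m`, and code nodes `σ^{(i,b)}_(h,r)`, `σ^{(j,b)}_(h,s)` adjacent iff
`r ≠ s`); between the two copies, the only edges are the input edges:
`v^{(i,1)}_{m₁}` is adjacent to `v^{(i,2)}_{m₂}` iff `x^i_{(m₁,m₂)} = 0`. -/
def quadAdj (t k ℓ α : ℕ) (C : Fin k → Fin (ℓ + α) → Fin (ℓ + α))
    (x : Fin t → Fin k → Fin k → Bool) :
    QuadVtx t k ℓ α → QuadVtx t k ℓ α → Prop :=
  fun u v =>
    match u, v with
    | Sum.inl (i, b, m), Sum.inl (i', b', m') =>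
        i = i' ∧ ((b = b' ∧ m ≠ m') ∨
          (b = false ∧ b' = true ∧ x i m m' = false) ∨
          (b = true ∧ b' = false ∧ x i m' m = false))
    | Sum.inl (i, b, m), Sum.inr (i', b', h, r) => i = i' ∧ b = b' ∧ r ≠ C m h
    | Sum.inr (i', b', h, r), Sum.inl (i, b, m) => i = i' ∧ b = b' ∧ r ≠ C m h
    | Sum.inr (_, b, h, r), Sum.inr (_, b', h', r') => b = b' ∧ h = h' ∧ r ≠ r'

/-- A set of vertices is independent if it contains no two adjacent vertices. -/
def quadIndep (t k ℓ α : ℕ) (C : Fin k → Fin (ℓ + α) → Fin (ℓ + α))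
    (x : Fin t → Fin k → Fin k → Bool) (I : Set (QuadVtx t k ℓ α)) : Prop :=
  ∀ u ∈ I, ∀ v ∈ I, ¬ quadAdj t k ℓ α C x u v

/-- Node weights of `F_{x̄}`: every clique node has weight `ℓ`, every code node weight
`1`. -/
def quadWeight (t k ℓ α : ℕ) : QuadVtx t k ℓ α → ℕ :=
  fun v =>
    match v with
    | Sum.inl _ => ℓ
    | Sum.inr _ => 1

/-- Quadratic lower bound graph: if there is a pair `(m₁, m₂)` with
`x^i_{(m₁,m₂)} = 1` for all `i`, then `F_{x̄}` contains an independent set of total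
weight at least `4tℓ + 2αt`. -/
theorem stmt12 (t k ℓ α : ℕ) (hk : k = (ℓ + α) ^ α)
    (C : Fin k → Fin (ℓ + α) → Fin (ℓ + α))
    (hC : ∀ m m' : Fin k, m ≠ m' → ℓ ≤ hammingDist (C m) (C m'))
    (x : Fin t → Fin k → Fin k → Bool) (m₁ m₂ : Fin k)
    (hm : ∀ i : Fin t, x i m₁ m₂ = true) :
    ∃ I : Finset (QuadVtx t k ℓ α),
      quadIndep t k ℓ α C x ↑I ∧
      4 * t * ℓ + 2 * α * t ≤ ∑ v ∈ I, quadWeight t k ℓ α v := by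

  classical
  set mb : Bool → Fin k := fun b => if b then m₂ else m₁ with hmb
  set f : Fin t × Bool → QuadVtx t k ℓ α := fun p => Sum.inl (p.1, p.2, mb p.2) with hf
  set g : Fin t × Bool × Fin (ℓ+α) → QuadVtx t k ℓ α :=
    (fun p => Sum.inr (p.1, p.2.1, p.2.2, C (mb p.2.1) p.2.2)) with hg
  have hfinj : Function.Injective f := by
    rintro ⟨i, b⟩ ⟨i', b'⟩ h
    simp only [hf, Sum.inl.injEq, Prod.mk.injEq] at h
    simp [h.1, h.2.1]
  have hginj : Function.Injective g := by
    rintro ⟨i, b, h0⟩ ⟨i', b', h0'⟩ h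
    simp only [hg, Sum.inr.injEq, Prod.mk.injEq] at h
    simp [h.1, h.2.1, h.2.2.1]
  refine ⟨Finset.univ.image f ∪ Finset.univ.image g, ?_, ?_⟩
  · intro u hu v hv hadj
    simp only [Finset.coe_union, Finset.coe_image, Finset.coe_univ, Set.image_univ,
      Set.mem_union, Set.mem_range] at hu hv
    rcases hu with ⟨⟨i, b⟩, rfl⟩ | ⟨⟨i, b, h⟩, rfl⟩ <;>
      rcases hv with ⟨⟨i', b'⟩, rfl⟩ | ⟨⟨i', b', h'⟩, rfl⟩ <;>
      simp only [hf, hg, quadAdj] at hadj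
    · obtain ⟨rfl, h2⟩ := hadj
      rcases h2 with ⟨rfl, hne⟩ | ⟨rfl, rfl, hx⟩ | ⟨rfl, rfl, hx⟩
      · exact hne rfl
      · simp only [hmb, if_true, if_false, Bool.false_eq_true] at hx
        rw [hm i] at hx; simp at hx
      · simp only [hmb, if_true, if_false, Bool.false_eq_true] at hx
        rw [hm i] at hx; simp at hx
    · obtain ⟨rfl, rfl, hr⟩ := hadj; exact hr rfl
    · obtain ⟨rfl, rfl, hr⟩ := hadj; exact hr rfl
    · obtain ⟨rfl, rfl, hr⟩ := hadj; exact hr rfl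
  · have hdisj : Disjoint (Finset.univ.image f) (Finset.univ.image g) := by
      rw [Finset.disjoint_left]
      rintro a ha hb
      simp only [Finset.mem_image] at ha hb
      obtain ⟨p, -, rfl⟩ := ha
      obtain ⟨q, -, hq⟩ := hb
      exact absurd hq (by simp [hf, hg])
    rw [Finset.sum_union hdisj, Finset.sum_image (fun a _ b _ h => hfinj h),
      Finset.sum_image (fun a _ b _ h => hginj h)]
    simp only [hf, hg, quadWeight, Finset.sum_const, Finset.card_univ, Fintype.card_prod,
      Fintype.card_bool, Fintype.card_fin, smul_eq_mul, mul_one]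
    ring_nf
    nlinarith [Nat.zero_le t]
end

section
/- In the quadratic lower bound graph F_{x̄}, if the strings x¹, ..., x^t ∈ {0,1}^{k²} are pairwise disjoint, then every independent set has total weight at most 3(t+1)ℓ + 3α·t³. -/
lemma quad_sum_card_le {ι β : Type*} [DecidableEq ι] [DecidableEq β] {a : ℕ}
    (f : ι → Finset β) :
    ∀ S : Finset ι, (∀ q ∈ S, ∀ q' ∈ S, q ≠ q' → ((f q) ∩ (f q')).card ≤ a) →
      ∑ q ∈ S, (f q).card ≤ (S.biUnion f).card + S.card * S.card * a := by
  intro S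
  induction S using Finset.induction_on with
  | empty => simp
  | @insert q S hq ih =>
      intro hf
      rw [Finset.sum_insert hq]
      have h1 : ∑ p ∈ S, (f p).card ≤ (S.biUnion f).card + S.card * S.card * a :=
        ih (fun p hp p' hp' hne =>
          hf p (Finset.mem_insert_of_mem hp) p' (Finset.mem_insert_of_mem hp') hne)
      have h2 : (f q).card + (S.biUnion f).card
          = ((insert q S).biUnion f).card + (f q ∩ S.biUnion f).card := by
        rw [Finset.biUnion_insert]
        exact (Finset.card_union_add_card_inter _ _).symm
      have h3 : (f q ∩ S.biUnion f).card ≤ S.card * a := by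
        have he : f q ∩ S.biUnion f = S.biUnion (fun p => f q ∩ f p) := by
          ext y
          simp only [Finset.mem_inter, Finset.mem_biUnion]
          tauto
        rw [he]
        calc (S.biUnion fun p => f q ∩ f p).card ≤ ∑ p ∈ S, (f q ∩ f p).card :=
              Finset.card_biUnion_le
          _ ≤ ∑ _p ∈ S, a := Finset.sum_le_sum (fun p hp =>
              hf q (Finset.mem_insert_self q S) p (Finset.mem_insert_of_mem hp)
                (fun h => hq (h ▸ hp)))
          _ = S.card * a := by rw [Finset.sum_const, smul_eq_mul]
      have hcard : (insert q S).card = S.card + 1 := Finset.card_insert_of_notMem hq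
      rw [hcard]
      nlinarith [h1, h2, h3]

/-- Quadratic lower bound graph: if the strings `x¹, …, x^t ∈ {0,1}^{k²}` are pairwise
disjoint, then every independent set of `F_{x̄}` has total weight at most
`3(t+1)ℓ + 3α·t³`. -/
theorem stmt13 (t k ℓ α : ℕ) (hk : k = (ℓ + α) ^ α)
    (C : Fin k → Fin (ℓ + α) → Fin (ℓ + α))
    (hC : ∀ m m' : Fin k, m ≠ m' → ℓ ≤ hammingDist (C m) (C m'))
    (x : Fin t → Fin k → Fin k → Bool)
    (hdisj : ∀ i j : Fin t, i ≠ j →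
      ∀ a b : Fin k, ¬ (x i a b = true ∧ x j a b = true)) :
    ∀ I : Finset (QuadVtx t k ℓ α),
      quadIndep t k ℓ α C x ↑I →
      ∑ v ∈ I, quadWeight t k ℓ α v ≤ 3 * (t + 1) * ℓ + 3 * α * t ^ 3 := by
  classical
  intro I hI
  have hk0 : 0 < k := by
    rcases Nat.eq_zero_or_pos α with h | h
    · simp [hk, h]
    · have : 0 < ℓ + α := by omega
      rw [hk]; exact pow_pos this α
  -- basic independence facts
  have hind : ∀ u ∈ I, ∀ v ∈ I, ¬ quadAdj t k ℓ α C x u v := fun u hu v hv =>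
    hI u (Finset.mem_coe.mpr hu) v (Finset.mem_coe.mpr hv)
  have fact_cc : ∀ (i j : Fin t) (b : Bool) (h r r' : Fin (ℓ + α)),
      Sum.inr (i, b, h, r) ∈ I → Sum.inr (j, b, h, r') ∈ I → r = r' := by
    intro i j b h r r' h1 h2
    by_contra hne
    exact hind _ h1 _ h2 ⟨rfl, rfl, hne⟩
  have fact_qq : ∀ (i : Fin t) (b : Bool) (m m' : Fin k),
      Sum.inl (i, b, m) ∈ I → Sum.inl (i, b, m') ∈ I → m = m' := by
    intro i b m m' h1 h2
    by_contra hne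
    exact hind _ h1 _ h2 ⟨rfl, Or.inl ⟨rfl, hne⟩⟩
  have fact_qc : ∀ (i : Fin t) (b : Bool) (m : Fin k) (h r : Fin (ℓ + α)),
      Sum.inl (i, b, m) ∈ I → Sum.inr (i, b, h, r) ∈ I → r = C m h := by
    intro i b m h r h1 h2
    by_contra hne
    exact hind _ h1 _ h2 ⟨rfl, rfl, hne⟩
  have fact_x : ∀ (i : Fin t) (m m' : Fin k),
      Sum.inl (i, false, m) ∈ I → Sum.inl (i, true, m') ∈ I → x i m m' = true := by
    intro i m m' h1 h2
    by_contra hx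
    have hx' : x i m m' = false := by simpa using hx
    exact hind _ h1 _ h2 ⟨rfl, Or.inr (Or.inl ⟨rfl, rfl, hx'⟩)⟩
  -- the clique and code pieces of I, per player and copy
  set cq : Fin t → Bool → Finset (Fin k) :=
    fun i b => Finset.univ.filter (fun m => Sum.inl (i, b, m) ∈ I) with hcq
  set cd : Fin t → Bool → Finset (Fin (ℓ + α) × Fin (ℓ + α)) :=
    fun i b => Finset.univ.filter (fun p => Sum.inr (i, b, p.1, p.2) ∈ I) with hcd
  have hcq1 : ∀ i b, (cq i b).card ≤ 1 := by
    intro i b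
    refine Finset.card_le_one.mpr (fun m hm m' hm' => ?_)
    rw [hcq] at hm hm'
    simp only [Finset.mem_filter, Finset.mem_univ, true_and] at hm hm'
    exact fact_qq i b m m' hm hm'
  have hcdL : ∀ i b, (cd i b).card ≤ ℓ + α := by
    intro i b
    have hle : (cd i b).card ≤ (Finset.univ : Finset (Fin (ℓ + α))).card := by
      refine Finset.card_le_card_of_injOn (fun p => p.1) (fun _ _ => Finset.mem_univ _) ?_
      intro p hp q hq hpq
      rw [hcd] at hp hq
      simp only [Finset.mem_coe, Finset.mem_filter, Finset.mem_univ, true_and] at hp hq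
      have h1 : p.1 = q.1 := hpq
      have h2 : p.2 = q.2 := fact_cc i i b q.1 p.2 q.2 (by rw [← h1]; exact hp) hq
      exact Prod.ext h1 h2
    simpa using hle
  -- weight decomposition
  have hAux1 : ∀ (i : Fin t) (b : Bool),
      (∑ m : Fin k, if (Sum.inl (i, b, m) : QuadVtx t k ℓ α) ∈ I then ℓ else 0)
        = ℓ * (cq i b).card := by
    intro i b
    simp only [hcq]
    rw [Finset.card_filter, Finset.mul_sum]
    exact Finset.sum_congr rfl (fun m _ => by simp)
  have hAux2 : ∀ (i : Fin t) (b : Bool),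
      (∑ h : Fin (ℓ + α), ∑ r : Fin (ℓ + α),
        if (Sum.inr (i, b, h, r) : QuadVtx t k ℓ α) ∈ I then 1 else 0)
        = (cd i b).card := by
    intro i b
    simp only [hcd]
    rw [Finset.card_filter, Fintype.sum_prod_type]
    refine Finset.sum_congr rfl fun a _ => Finset.sum_congr rfl fun r _ => ?_
    congr!
  have hW : ∑ v ∈ I, quadWeight t k ℓ α v
      = ∑ i : Fin t, ∑ b : Bool, (ℓ * (cq i b).card + (cd i b).card) := by
    have h0 : (∑ v ∈ I, quadWeight t k ℓ α v)
        = ∑ v : QuadVtx t k ℓ α, if v ∈ I then quadWeight t k ℓ α v else 0 := by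
      rw [Finset.sum_ite_mem, Finset.univ_inter]
    rw [h0, Fintype.sum_sum_type]
    simp only [Fintype.sum_prod_type, quadWeight]
    simp only [Finset.sum_add_distrib]
    congr 1
    · exact Finset.sum_congr rfl (fun i _ => Finset.sum_congr rfl (fun b _ => hAux1 i b))
    · exact Finset.sum_congr rfl (fun i _ => Finset.sum_congr rfl (fun b _ => hAux2 i b))
  -- trivial per-entry bound
  have htriv : ∀ (i : Fin t) (b : Bool),
      ℓ * (cq i b).card + (cd i b).card ≤ ℓ + (ℓ + α) := by
    intro i b
    have h1 : ℓ * (cq i b).card ≤ ℓ :=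
      le_trans (Nat.mul_le_mul_left ℓ (hcq1 i b)) (by simp)
    have h2 := hcdL i b
    omega
  rw [hW]
  by_cases ht : t ≤ 1
  · -- trivial case
    have hle : ∑ i : Fin t, ∑ b : Bool, (ℓ * (cq i b).card + (cd i b).card)
        ≤ ∑ _i : Fin t, ∑ _b : Bool, (ℓ + (ℓ + α)) :=
      Finset.sum_le_sum fun i _ => Finset.sum_le_sum fun b _ => htriv i b
    have hconst : (∑ _i : Fin t, ∑ _b : Bool, (ℓ + (ℓ + α))) = t * (2 * (ℓ + (ℓ + α))) := by
      simp [Finset.sum_const, Finset.card_univ, mul_comm]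
    rw [hconst] at hle
    interval_cases t
    · simpa using hle
    · refine le_trans hle ?_
      ring_nf
      omega
  push_neg at ht
  -- main case : 2 ≤ t
  have ht2 : 2 ≤ t := ht
  set B : Finset (Fin t) :=
    Finset.univ.filter (fun i => (cq i false).Nonempty ∧ (cq i true).Nonempty) with hBdef
  set mm : Fin t → Bool → Fin k :=
    fun i b => if h : (cq i b).Nonempty then h.choose else ⟨0, hk0⟩ with hmmdef
  have hmm_mem : ∀ (i : Fin t) (b : Bool), (cq i b).Nonempty →
      Sum.inl (i, b, mm i b) ∈ I := by
    intro i b h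
    have hmem : mm i b ∈ cq i b := by
      simp only [hmmdef, dif_pos h]
      exact h.choose_spec
    rw [hcq] at hmem
    simpa using hmem
  have hBmem : ∀ i ∈ B, ∀ b : Bool, (cq i b).Nonempty := by
    intro i hi b
    rw [hBdef] at hi
    simp only [Finset.mem_filter, Finset.mem_univ, true_and] at hi
    cases b
    · exact hi.1
    · exact hi.2
  set Hh : Fin t → Bool → Finset (Fin (ℓ + α)) :=
    fun i b => Finset.univ.filter (fun h => Sum.inr (i, b, h, C (mm i b) h) ∈ I) with hHhdef
  set Z : Bool → Fin k → Finset (Fin (ℓ + α)) :=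
    fun b μ => Finset.univ.filter (fun h => ∃ j : Fin t, Sum.inr (j, b, h, C μ h) ∈ I) with hZdef
  have hcdHh : ∀ i ∈ B, ∀ b : Bool, (cd i b).card = (Hh i b).card := by
    intro i hi b
    have hne : (cq i b).Nonempty := hBmem i hi b
    have hmb : Sum.inl (i, b, mm i b) ∈ I := hmm_mem i b hne
    have himg : cd i b = (Hh i b).image (fun h => (h, C (mm i b) h)) := by
      ext p
      simp only [hcd, hHhdef, Finset.mem_filter, Finset.mem_univ, true_and, Finset.mem_image]
      constructor
      · intro hp
        have h2 : p.2 = C (mm i b) p.1 := fact_qc i b (mm i b) p.1 p.2 hmb hp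
        refine ⟨p.1, ?_, ?_⟩
        · rw [← h2]; exact hp
        · exact Prod.ext rfl h2.symm
      · rintro ⟨h, hmem, rfl⟩
        exact hmem
    rw [himg, Finset.card_image_of_injective]
    intro a b' hab
    simpa using congrArg Prod.fst hab
  have hHZ : ∀ (i : Fin t) (b : Bool), (Hh i b).card ≤ (Z b (mm i b)).card := by
    intro i b
    refine Finset.card_le_card (fun h hh => ?_)
    rw [hHhdef] at hh
    simp only [Finset.mem_filter, Finset.mem_univ, true_and] at hh
    rw [hZdef]
    simp only [Finset.mem_filter, Finset.mem_univ, true_and]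
    exact ⟨i, hh⟩
  have hZZ : ∀ (b : Bool) (μ μ' : Fin k), μ ≠ μ' → ((Z b μ) ∩ (Z b μ')).card ≤ α := by
    intro b μ μ' hne
    have hsub : (Z b μ) ∩ (Z b μ') ⊆ Finset.univ.filter (fun h => C μ h = C μ' h) := by
      intro h hh
      rw [Finset.mem_inter] at hh
      obtain ⟨h1, h2⟩ := hh
      rw [hZdef] at h1 h2
      simp only [Finset.mem_filter, Finset.mem_univ, true_and] at h1 h2
      obtain ⟨j1, hj1⟩ := h1
      obtain ⟨j2, hj2⟩ := h2
      simp only [Finset.mem_filter, Finset.mem_univ, true_and]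
      exact fact_cc j1 j2 b h _ _ hj1 hj2
    have hcard := Finset.card_le_card hsub
    have hsplit2 : (Finset.univ.filter (fun h => C μ h = C μ' h)).card
        + (Finset.univ.filter (fun h => ¬ C μ h = C μ' h)).card
        = (Finset.univ : Finset (Fin (ℓ + α))).card :=
      Finset.card_filter_add_card_filter_not _
    have hdist := hC μ μ' hne
    have hdist' : ℓ ≤ (Finset.univ.filter (fun h => ¬ C μ h = C μ' h)).card := by
      have : hammingDist (C μ) (C μ')
          = (Finset.univ.filter (fun h => ¬ C μ h = C μ' h)).card := by
        rw [hammingDist]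
      omega
    have huniv : (Finset.univ : Finset (Fin (ℓ + α))).card = ℓ + α := by simp
    omega
  have hfiber : ∀ b : Bool, ∑ i ∈ B, (Z b (mm i b)).card
      = ∑ μ ∈ B.image (fun i => mm i b),
          (B.filter (fun i => mm i b = μ)).card * (Z b μ).card := by
    intro b
    rw [Finset.sum_comp (fun μ => (Z b μ).card) (fun i => mm i b)]
    simp [smul_eq_mul]
  have hZsum : ∀ b : Bool,
      ∑ μ ∈ B.image (fun i => mm i b), (Z b μ).card ≤ (ℓ + α) + t * t * α := by
    intro b
    have h1 := quad_sum_card_le (a := α) (Z b) (B.image (fun i => mm i b))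
      (fun μ _ μ' _ hne => hZZ b μ μ' hne)
    have h2 : (((B.image (fun i => mm i b)).biUnion (Z b)).card : ℕ) ≤ ℓ + α := by
      have := Finset.card_le_univ ((B.image (fun i => mm i b)).biUnion (Z b))
      simpa using this
    have h3 : (B.image (fun i => mm i b)).card ≤ t := by
      calc (B.image (fun i => mm i b)).card ≤ B.card := Finset.card_image_le
        _ ≤ (Finset.univ : Finset (Fin t)).card := Finset.card_le_univ B
        _ = t := by simp
    have h4 : (B.image (fun i => mm i b)).card * (B.image (fun i => mm i b)).card * α
        ≤ t * t * α := Nat.mul_le_mul_right α (Nat.mul_le_mul h3 h3)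
    omega
  have hcopy : ∀ (b : Bool) (μ0 : Fin k),
      (∀ μ ∈ B.image (fun i => mm i b),
        (B.filter (fun i => mm i b = μ)).card ≤ (B.filter (fun i => mm i b = μ0)).card) →
      ∑ i ∈ B, (cd i b).card
        ≤ (B.filter (fun i => mm i b = μ0)).card * ((ℓ + α) + t * t * α) := by
    intro b μ0 hmax
    calc ∑ i ∈ B, (cd i b).card = ∑ i ∈ B, (Hh i b).card :=
          Finset.sum_congr rfl (fun i hi => hcdHh i hi b)
      _ ≤ ∑ i ∈ B, (Z b (mm i b)).card := Finset.sum_le_sum (fun i _ => hHZ i b)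
      _ = ∑ μ ∈ B.image (fun i => mm i b),
            (B.filter (fun i => mm i b = μ)).card * (Z b μ).card := hfiber b
      _ ≤ ∑ μ ∈ B.image (fun i => mm i b),
            (B.filter (fun i => mm i b = μ0)).card * (Z b μ).card :=
          Finset.sum_le_sum (fun μ hμ => Nat.mul_le_mul_right _ (hmax μ hμ))
      _ = (B.filter (fun i => mm i b = μ0)).card
            * ∑ μ ∈ B.image (fun i => mm i b), (Z b μ).card := by
          rw [Finset.mul_sum]
      _ ≤ (B.filter (fun i => mm i b = μ0)).card * ((ℓ + α) + t * t * α) :=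
          Nat.mul_le_mul_left _ (hZsum b)
  -- combined bound on the code weight of players with clique nodes in both copies
  have hBbound : (∑ i ∈ B, (cd i false).card) + (∑ i ∈ B, (cd i true).card)
      ≤ (B.card + 1) * ((ℓ + α) + t * t * α) := by
    rcases Finset.eq_empty_or_nonempty B with hBe | hBne
    · simp [hBe]
    · obtain ⟨μf, hμf_mem, hμf_max⟩ := Finset.exists_max_image
        (B.image (fun i => mm i false))
        (fun μ => (B.filter (fun i => mm i false = μ)).card) (hBne.image _)
      obtain ⟨μt, hμt_mem, hμt_max⟩ := Finset.exists_max_image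
        (B.image (fun i => mm i true))
        (fun μ => (B.filter (fun i => mm i true = μ)).card) (hBne.image _)
      have hcf := hcopy false μf hμf_max
      have hct := hcopy true μt hμt_max
      have hg : (B.filter (fun i => mm i false = μf)).card
          + (B.filter (fun i => mm i true = μt)).card ≤ B.card + 1 := by
        have hinter : ((B.filter (fun i => mm i false = μf))
            ∩ (B.filter (fun i => mm i true = μt))).card ≤ 1 := by
          refine Finset.card_le_one.mpr (fun i hi j hj => ?_)
          have hi' := Finset.mem_inter.mp hi
          have hj' := Finset.mem_inter.mp hj
          have hiB := (Finset.mem_filter.mp hi'.1).1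
          have hif := (Finset.mem_filter.mp hi'.1).2
          have hit := (Finset.mem_filter.mp hi'.2).2
          have hjB := (Finset.mem_filter.mp hj'.1).1
          have hjf := (Finset.mem_filter.mp hj'.1).2
          have hjt := (Finset.mem_filter.mp hj'.2).2
          by_contra hij
          have hxi : x i (mm i false) (mm i true) = true :=
            fact_x i (mm i false) (mm i true)
              (hmm_mem i false (hBmem i hiB false)) (hmm_mem i true (hBmem i hiB true))
          have hxj : x j (mm i false) (mm i true) = true := by
            have := fact_x j (mm j false) (mm j true)
              (hmm_mem j false (hBmem j hjB false)) (hmm_mem j true (hBmem j hjB true))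
            rw [hjf, ← hif] at this
            rw [hjt, ← hit] at this
            exact this
          exact hdisj i j hij (mm i false) (mm i true) ⟨hxi, hxj⟩
        have hunion : ((B.filter (fun i => mm i false = μf))
            ∪ (B.filter (fun i => mm i true = μt))).card ≤ B.card := by
          refine Finset.card_le_card (fun i hi => ?_)
          rcases Finset.mem_union.mp hi with h | h
          · exact (Finset.mem_filter.mp h).1
          · exact (Finset.mem_filter.mp h).1
        have hcui := Finset.card_union_add_card_inter
          (B.filter (fun i => mm i false = μf)) (B.filter (fun i => mm i true = μt))
        omega
      calc (∑ i ∈ B, (cd i false).card) + (∑ i ∈ B, (cd i true).card)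
          ≤ (B.filter (fun i => mm i false = μf)).card * ((ℓ + α) + t * t * α)
            + (B.filter (fun i => mm i true = μt)).card * ((ℓ + α) + t * t * α) :=
            add_le_add hcf hct
        _ = ((B.filter (fun i => mm i false = μf)).card
            + (B.filter (fun i => mm i true = μt)).card) * ((ℓ + α) + t * t * α) := by ring
        _ ≤ (B.card + 1) * ((ℓ + α) + t * t * α) := Nat.mul_le_mul_right _ hg
  -- split the main sum over B and its complement
  have hsplit3 : ∑ i : Fin t, ∑ b : Bool, (ℓ * (cq i b).card + (cd i b).card)
      = (∑ i ∈ B, ∑ b : Bool, (ℓ * (cq i b).card + (cd i b).card))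
        + ∑ i ∈ Finset.univ.filter
            (fun i => ¬ ((cq i false).Nonempty ∧ (cq i true).Nonempty)),
            ∑ b : Bool, (ℓ * (cq i b).card + (cd i b).card) := by
    rw [hBdef]
    exact (Finset.sum_filter_add_sum_filter_not _ _ _).symm
  have hcardsplit : B.card + (Finset.univ.filter
      (fun i => ¬ ((cq i false).Nonempty ∧ (cq i true).Nonempty))).card = t := by
    rw [hBdef, Finset.card_filter_add_card_filter_not]
    simp
  have hBpart : ∑ i ∈ B, ∑ b : Bool, (ℓ * (cq i b).card + (cd i b).card)
      ≤ 2 * ℓ * B.card + (B.card + 1) * ((ℓ + α) + t * t * α) := by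
    have hexp : ∀ i ∈ B, ∑ b : Bool, (ℓ * (cq i b).card + (cd i b).card)
        ≤ 2 * ℓ + ((cd i false).card + (cd i true).card) := by
      intro i _
      rw [Fintype.sum_bool]
      have h1 : ℓ * (cq i false).card ≤ ℓ :=
        le_trans (Nat.mul_le_mul_left ℓ (hcq1 i false)) (by simp)
      have h2 : ℓ * (cq i true).card ≤ ℓ :=
        le_trans (Nat.mul_le_mul_left ℓ (hcq1 i true)) (by simp)
      linarith
    calc ∑ i ∈ B, ∑ b : Bool, (ℓ * (cq i b).card + (cd i b).card)
        ≤ ∑ i ∈ B, (2 * ℓ + ((cd i false).card + (cd i true).card)) :=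
          Finset.sum_le_sum hexp
      _ = 2 * ℓ * B.card + ((∑ i ∈ B, (cd i false).card) + ∑ i ∈ B, (cd i true).card) := by
          rw [Finset.sum_add_distrib, Finset.sum_const, Finset.sum_add_distrib, smul_eq_mul]
          ring
      _ ≤ 2 * ℓ * B.card + (B.card + 1) * ((ℓ + α) + t * t * α) :=
          Nat.add_le_add_left hBbound _
  have hCpart : ∑ i ∈ Finset.univ.filter
      (fun i => ¬ ((cq i false).Nonempty ∧ (cq i true).Nonempty)),
      ∑ b : Bool, (ℓ * (cq i b).card + (cd i b).card)
      ≤ (Finset.univ.filter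
          (fun i => ¬ ((cq i false).Nonempty ∧ (cq i true).Nonempty))).card
          * (ℓ + 2 * (ℓ + α)) := by
    refine le_trans (Finset.sum_le_sum ?_) (by rw [Finset.sum_const, smul_eq_mul])
    intro i hi
    have hi' := (Finset.mem_filter.mp hi).2
    rw [Fintype.sum_bool]
    have hf := hcdL i false
    have htt := hcdL i true
    have h1 : ℓ * (cq i false).card ≤ ℓ :=
      le_trans (Nat.mul_le_mul_left ℓ (hcq1 i false)) (by simp)
    have h2 : ℓ * (cq i true).card ≤ ℓ :=
      le_trans (Nat.mul_le_mul_left ℓ (hcq1 i true)) (by simp)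
    have hzero : (cq i false).card = 0 ∨ (cq i true).card = 0 := by
      by_contra hcc
      push_neg at hcc
      exact hi' ⟨Finset.card_pos.mp (Nat.pos_of_ne_zero hcc.1),
        Finset.card_pos.mp (Nat.pos_of_ne_zero hcc.2)⟩
    rcases hzero with h | h
    · rw [h, mul_zero]
      linarith
    · rw [h, mul_zero]
      linarith
  rw [hsplit3]
  refine le_trans (add_le_add hBpart hCpart) ?_
  set s := B.card with hsdef
  set c2 := (Finset.univ.filter
      (fun i => ¬ ((cq i false).Nonempty ∧ (cq i true).Nonempty))).card with hc2def
  have hcoef : (s + 1) * (1 + t * t) + 2 * c2 ≤ 3 * (t * t * t) := by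
    nlinarith [hcardsplit, ht2]
  have hcoefα : ((s + 1) * (1 + t * t) + 2 * c2) * α ≤ 3 * (t * t * t) * α :=
    Nat.mul_le_mul_right α hcoef
  have hpow : t ^ 3 = t * t * t := by ring
  rw [hpow]
  nlinarith [hcoefα, hcardsplit]
end
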